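/- Let w₁ ≥ 0, w₂ > 0, c > 0 be reals, let 0 < σ₁ ≤ σ₂ ≤ c, let μ₁, μ₂, x ∈ ℝ, and let π₁, π₂ ≥ 0 with π₁ + π₂ = 1. Set w₃ = w₂(σ₂² + (μ₁ − μ₂)²) and w₄ = 1 + w₂. Then log( π₁ φ(x; μ₁, σ₁) + π₂ φ(x; μ₂, σ₂) ) − w₁ KL(N(μ₁,σ₁²), N(μ₂,σ₂²)) − w₂ KL(N(μ₂,σ₂²), N(μ₁,σ₁²)) ≤ −(w₄/2) log(w₃/w₄) − w₄/2 + w₂ log c + (w₁ + w₂)/2. -/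

import Mathlib

open Real

/-- Univariate Gaussian density `φ(x; μ, σ) = (1/(√(2π) σ)) exp(−(x−μ)²/(2σ²))`. -/
noncomputable def phi (x μ σ : ℝ) : ℝ :=
  (1 / (Real.sqrt (2 * Real.pi) * σ)) * Real.exp (-(x - μ) ^ 2 / (2 * σ ^ 2))

/-- Closed form of the KL divergence between the univariate Gaussians
`N(μ₁, σ₁²)` and `N(μ₂, σ₂²)`:
`KL = log(σ₂/σ₁) + (σ₁² + (μ₁−μ₂)²)/(2σ₂²) − 1/2`. -/
noncomputable def klUni (μ₁ σ₁ μ₂ σ₂ : ℝ) : ℝ :=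
  Real.log (σ₂ / σ₁) + (σ₁ ^ 2 + (μ₁ - μ₂) ^ 2) / (2 * σ₂ ^ 2) - 1 / 2

/-! Both Gaussian densities are at most `1/σ₁`, so the log-mixture is at most `-log σ₁`, and the
forward divergence is nonnegative. With `D = σ₂² + (μ₁ - μ₂)²`, the reverse divergence is
`log σ₁ - log σ₂ + D/(2σ₁²) - 1/2`, so the left-hand side is at most
`-((1 + w₂)/2) log t - w₂ D/(2t) + w₂ log σ₂ + w₂/2` with `t = σ₁²`. Maximizing over `t`
(the maximum sits at `t = w₂ D/(1 + w₂)`, which is `log s ≤ s - 1`) and using `σ₂ ≤ c` gives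
the bound. -/

theorem mul_log_div_add_le_mul_log_add_div {a b t : ℝ} (ha : 0 < a) (hb : 0 < b) (ht : 0 < t) :
    a * log (b / a) + a ≤ a * log t + b / t := by
  have hlog : log (b / (a * t)) ≤ b / (a * t) - 1 := log_le_sub_one_of_pos (by positivity)
  rw [log_div hb.ne' (by positivity), log_mul ha.ne' ht.ne'] at hlog
  rw [log_div hb.ne' ha.ne']
  calc a * (log b - log a) + a = a * (log b - (log a + log t)) + a + a * log t := by ring
    _ ≤ a * (b / (a * t) - 1) + a + a * log t := by gcongr
    _ = a * log t + b / t := by field_simp; ring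

theorem phi_pos (x μ : ℝ) {σ : ℝ} (hσ : 0 < σ) : 0 < phi x μ σ := by
  unfold phi
  positivity

theorem phi_le_inv (x μ : ℝ) {σ : ℝ} (hσ : 0 < σ) : phi x μ σ ≤ σ⁻¹ := by
  have hsqrt : 1 ≤ sqrt (2 * π) := one_le_sqrt.mpr (by linarith [pi_gt_three])
  have hexp : exp (-(x - μ) ^ 2 / (2 * σ ^ 2)) ≤ 1 :=
    exp_le_one_iff.mpr (div_nonpos_of_nonpos_of_nonneg (neg_nonpos.mpr (sq_nonneg _))
      (by positivity))
  calc phi x μ σ ≤ 1 / (sqrt (2 * π) * σ) * 1 := by unfold phi; gcongr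
    _ ≤ σ⁻¹ := by
      rw [mul_one, one_div]
      exact inv_anti₀ hσ (le_mul_of_one_le_left hσ.le hsqrt)

theorem log_mixture_phi_le_neg_log (x μ₁ μ₂ : ℝ) {σ₁ σ₂ π₁ π₂ : ℝ} (hσ₁ : 0 < σ₁)
    (hσ₁₂ : σ₁ ≤ σ₂) (hπ₁ : 0 ≤ π₁) (hπ₂ : 0 ≤ π₂) (hπ : π₁ + π₂ = 1) :
    log (π₁ * phi x μ₁ σ₁ + π₂ * phi x μ₂ σ₂) ≤ -log σ₁ := by
  have hσ₂ : 0 < σ₂ := hσ₁.trans_le hσ₁₂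
  have hpos : 0 < π₁ * phi x μ₁ σ₁ + π₂ * phi x μ₂ σ₂ := by
    rcases hπ₁.lt_or_eq with hπ₁ | rfl
    · exact add_pos_of_pos_of_nonneg (mul_pos hπ₁ (phi_pos x μ₁ hσ₁))
        (mul_nonneg hπ₂ (phi_pos x μ₂ hσ₂).le)
    · rw [zero_add] at hπ
      simpa [hπ] using phi_pos x μ₂ hσ₂
  have hle : π₁ * phi x μ₁ σ₁ + π₂ * phi x μ₂ σ₂ ≤ σ₁⁻¹ := by
    have h₁ : phi x μ₁ σ₁ ≤ σ₁⁻¹ := phi_le_inv x μ₁ hσ₁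
    have h₂ : phi x μ₂ σ₂ ≤ σ₁⁻¹ := (phi_le_inv x μ₂ hσ₂).trans (inv_anti₀ hσ₁ hσ₁₂)
    calc π₁ * phi x μ₁ σ₁ + π₂ * phi x μ₂ σ₂ ≤ π₁ * σ₁⁻¹ + π₂ * σ₁⁻¹ := by gcongr
      _ = σ₁⁻¹ := by rw [← add_mul, hπ, one_mul]
  simpa [log_inv] using log_le_log hpos hle

theorem klUni_eq {μ₁ σ₁ μ₂ σ₂ : ℝ} (hσ₁ : σ₁ ≠ 0) (hσ₂ : σ₂ ≠ 0) :
    klUni μ₁ σ₁ μ₂ σ₂ = log σ₂ - log σ₁ + (σ₁ ^ 2 + (μ₁ - μ₂) ^ 2) / (2 * σ₂ ^ 2) - 1 / 2 := by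
  rw [klUni, log_div hσ₂ hσ₁]

theorem klUni_nonneg (μ₁ μ₂ : ℝ) {σ₁ σ₂ : ℝ} (hσ₁ : 0 < σ₁) (hσ₂ : 0 < σ₂) :
    0 ≤ klUni μ₁ σ₁ μ₂ σ₂ := by
  have hlog : log (σ₁ ^ 2 / σ₂ ^ 2) ≤ σ₁ ^ 2 / σ₂ ^ 2 - 1 := log_le_sub_one_of_pos (by positivity)
  rw [log_div (by positivity) (by positivity), log_pow, log_pow] at hlog
  have hmean : 0 ≤ (μ₁ - μ₂) ^ 2 / (2 * σ₂ ^ 2) := by positivity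
  rw [klUni_eq hσ₁.ne' hσ₂.ne', add_div, div_mul_eq_div_div_swap (σ₁ ^ 2)]
  push_cast at hlog
  linarith

theorem univariate_penalized_bound_general (w₁ w₂ c : ℝ) (hw₁ : 0 ≤ w₁) (hw₂ : 0 < w₂)
    (σ₁ σ₂ : ℝ) (hσ₁ : 0 < σ₁) (hσ₁₂ : σ₁ ≤ σ₂) (hσ₂c : σ₂ ≤ c)
    (μ₁ μ₂ x : ℝ) (π₁ π₂ : ℝ) (hπ₁ : 0 ≤ π₁) (hπ₂ : 0 ≤ π₂) (hπ : π₁ + π₂ = 1) :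
    Real.log (π₁ * phi x μ₁ σ₁ + π₂ * phi x μ₂ σ₂)
      - w₁ * klUni μ₁ σ₁ μ₂ σ₂ - w₂ * klUni μ₂ σ₂ μ₁ σ₁ ≤
      -((1 + w₂) / 2) * Real.log ((w₂ * (σ₂ ^ 2 + (μ₁ - μ₂) ^ 2)) / (1 + w₂))
        - (1 + w₂) / 2 + w₂ * Real.log c + (w₁ + w₂) / 2 := by
  have hσ₂ : 0 < σ₂ := hσ₁.trans_le hσ₁₂
  have hmix := log_mixture_phi_le_neg_log x μ₁ μ₂ hσ₁ hσ₁₂ hπ₁ hπ₂ hπ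
  have hforward := mul_nonneg hw₁ (klUni_nonneg μ₁ μ₂ hσ₁ hσ₂)
  have hσ₂_le_c := mul_le_mul_of_nonneg_left (log_le_log hσ₂ hσ₂c) hw₂.le
  have hopt := mul_log_div_add_le_mul_log_add_div (a := 1 + w₂)
    (b := w₂ * (σ₂ ^ 2 + (μ₁ - μ₂) ^ 2)) (t := σ₁ ^ 2) (by linarith) (by positivity) (by positivity)
  rw [log_pow] at hopt
  rw [klUni_eq hσ₂.ne' hσ₁.ne', sub_sq_comm μ₂ μ₁]
  linear_combination hmix + hforward + hσ₂_le_c + hopt / 2 + hw₁ / 2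

theorem univariate_penalized_bound (w₁ w₂ c : ℝ) (hw₁ : 0 ≤ w₁) (hw₂ : 0 < w₂) (hc : 0 < c)
    (σ₁ σ₂ : ℝ) (hσ₁ : 0 < σ₁) (hσ₁₂ : σ₁ ≤ σ₂) (hσ₂c : σ₂ ≤ c)
    (μ₁ μ₂ x : ℝ) (π₁ π₂ : ℝ) (hπ₁ : 0 ≤ π₁) (hπ₂ : 0 ≤ π₂) (hπ : π₁ + π₂ = 1) :
    Real.log (π₁ * phi x μ₁ σ₁ + π₂ * phi x μ₂ σ₂)
      - w₁ * klUni μ₁ σ₁ μ₂ σ₂ - w₂ * klUni μ₂ σ₂ μ₁ σ₁ ≤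
      -((1 + w₂) / 2) * Real.log ((w₂ * (σ₂ ^ 2 + (μ₁ - μ₂) ^ 2)) / (1 + w₂))
        - (1 + w₂) / 2 + w₂ * Real.log c + (w₁ + w₂) / 2 :=
  univariate_penalized_bound_general w₁ w₂ c hw₁ hw₂ σ₁ σ₂ hσ₁ hσ₁₂ hσ₂c μ₁ μ₂ x π₁ π₂ hπ₁ hπ₂ hπ
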